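/- arXiv:2106.13709 — 3 statements merged into one kernel-verified Lean document; each statement's English description precedes it below -/
import Mathlib

section
/- Theorem 3 (closed periodic curves stay in the convex hull): let r_0, r_1, ..., r_{N-1} be N >= 1 points in R^D taken on a closed periodic orbit. Then the closed shape r_kappa is a curve of period N, i.e. r_kappa(t + N) = r_kappa(t) for all real t, and r_kappa(t) lies in the convex hull of {r_0, ..., r_{N-1}} for every kappa > 0 and every real t > 0. -/
/-!
The weight `Π_κ(t - j, 1/2; N)` is `B_κ(sin(π(t-j)/N), sin(π/2N))`. Since `B_κ` is even in its
first argument and the shift `t ↦ t + N` only flips the sign of the sine, every weight is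
`N`-periodic, hence so is the closed shape. Since `tanh` is strictly increasing, `B_κ(x, y) > 0`
for `y > 0`, and `sin(π/2N) > 0`; so the closed shape is a center of mass of the landmarks with
positive weights, and lies in their convex hull.
-/

/-- The `B_κ`-function: `B_κ(x,y) = (1/2)(tanh((x+y)/κ) - tanh((x-y)/κ))`. -/
noncomputable def Bk (κ x y : ℝ) : ℝ :=
  (1/2) * (Real.tanh ((x + y) / κ) - Real.tanh ((x - y) / κ))

/-- The periodic `B_κ`-function: `Π_κ(x,y;T) = B_κ(sin(πx/T), sin(πy/T))`. -/
noncomputable def Pik (κ x y T : ℝ) : ℝ :=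
  Bk κ (Real.sin (Real.pi * x / T)) (Real.sin (Real.pi * y / T))

/-- The closed shape over landmarks `r 0, …, r (N-1)` in `ℝ^D`:
`r_κ(t) = (∑_j Π_κ(t-j,1/2;N) r_j) / (∑_j Π_κ(t-j,1/2;N))`. -/
noncomputable def closedShape (D N : ℕ) (r : ℕ → EuclideanSpace ℝ (Fin D)) (κ t : ℝ) :
    EuclideanSpace ℝ (Fin D) :=
  (∑ j ∈ Finset.range N, Pik κ (t - j) (1/2) N)⁻¹ •
    ∑ j ∈ Finset.range N, Pik κ (t - j) (1/2) N • r j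

open Finset

theorem Real.tanh_strictMono : StrictMono Real.tanh := by
  intro a b hab
  rw [Real.tanh_eq_sinh_div_cosh, Real.tanh_eq_sinh_div_cosh,
    div_lt_div_iff₀ (Real.cosh_pos _) (Real.cosh_pos _)]
  have h : 0 < Real.sinh (b - a) := Real.sinh_pos_iff.2 (sub_pos.2 hab)
  rw [Real.sinh_sub] at h
  linarith

theorem Bk_pos {κ y : ℝ} (hκ : 0 < κ) (hy : 0 < y) (x : ℝ) : 0 < Bk κ x y := by
  have h : Real.tanh ((x - y) / κ) < Real.tanh ((x + y) / κ) :=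
    Real.tanh_strictMono ((div_lt_div_iff_of_pos_right hκ).2 (by linarith))
  unfold Bk
  linarith

theorem Bk_neg_left (κ x y : ℝ) : Bk κ (-x) y = Bk κ x y := by
  have h₁ : -x + y = -(x - y) := by ring
  have h₂ : -x - y = -(x + y) := by ring
  simp only [Bk, h₁, h₂, neg_div, Real.tanh_neg]
  ring

theorem Pik_add_period (κ x y T : ℝ) : Pik κ (x + T) y T = Pik κ x y T := by
  rcases eq_or_ne T 0 with rfl | hT
  · rw [add_zero]
  have h : Real.pi * (x + T) / T = Real.pi * x / T + Real.pi := by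
    field_simp
  rw [Pik, h, Real.sin_add_pi, Bk_neg_left, Pik]

theorem Pik_pos {κ y T : ℝ} (hκ : 0 < κ) (hy : 0 < y) (hyT : y < T) (x : ℝ) :
    0 < Pik κ x y T := by
  have hT : 0 < T := hy.trans hyT
  refine Bk_pos hκ (Real.sin_pos_of_pos_of_lt_pi (by positivity) ?_) _
  rw [div_lt_iff₀ hT]
  exact mul_lt_mul_of_pos_left hyT Real.pi_pos

theorem closedShape_eq_centerMass (D N : ℕ) (r : ℕ → EuclideanSpace ℝ (Fin D)) (κ t : ℝ) :
    closedShape D N r κ t = (range N).centerMass (fun j => Pik κ (t - j) (1/2) N) r :=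
  rfl

theorem closedShape_add_period (D N : ℕ) (r : ℕ → EuclideanSpace ℝ (Fin D)) (κ t : ℝ) :
    closedShape D N r κ (t + N) = closedShape D N r κ t := by
  have h : ∀ j : ℕ, t + N - j = t - j + N := fun j => by ring
  simp only [closedShape, h, Pik_add_period]

theorem closedShape_mem_convexHull {D N : ℕ} (hN : 1 ≤ N) (r : ℕ → EuclideanSpace ℝ (Fin D))
    {κ : ℝ} (hκ : 0 < κ) (t : ℝ) :
    closedShape D N r κ t ∈ convexHull ℝ (r '' ↑(range N)) := by
  have hN' : (1 : ℝ) ≤ N := by exact_mod_cast hN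
  have hpos : ∀ j : ℕ, 0 < Pik κ (t - j) (1/2) N := fun j =>
    Pik_pos hκ one_half_pos (by linarith) _
  rw [closedShape_eq_centerMass]
  exact (range N).centerMass_mem_convexHull (fun j _ => (hpos j).le)
    (sum_pos (fun j _ => hpos j) ⟨0, mem_range.2 hN⟩) (fun j hj => Set.mem_image_of_mem r hj)

/-- Theorem 3: the closed shape over `N` landmarks is a closed curve of period `N`, and it
is contained in the convex hull of the landmarks for every `κ > 0` and every `t > 0`. -/
theorem closedShape_period_and_convexHull (D N : ℕ) (hN : 1 ≤ N)
    (r : ℕ → EuclideanSpace ℝ (Fin D)) (κ : ℝ) (hκ : 0 < κ) :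
    (∀ t : ℝ, closedShape D N r κ (t + N) = closedShape D N r κ t) ∧
    (∀ t : ℝ, 0 < t →
      closedShape D N r κ t ∈ convexHull ℝ (r '' (Set.Iic (N - 1)))) := by
  have hrange : (↑(range N) : Set ℕ) = Set.Iic (N - 1) := by
    ext j
    simp only [coe_range, Set.mem_Iio, Set.mem_Iic]
    omega
  refine ⟨closedShape_add_period D N r κ, fun t _ => ?_⟩
  rw [← hrange]
  exact closedShape_mem_convexHull hN r hκ t
end

section
/- Landmark recovery in the kappa -> 0 limit: let r_0, ..., r_{N-1} be N >= 1 points in R^D. For every integer n with 0 <= n <= N-1, the open shape satisfies: the limit as kappa -> 0+ of r_kappa(n) equals r_n. -/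
/-- The open shape over landmarks `r 0, …, r (N-1)` in `ℝ^D`:
`r_κ(t) = (∑_j B_κ(t-j,1/2) r_j) / (∑_j B_κ(t-j,1/2))`. -/
noncomputable def openShape (D N : ℕ) (r : ℕ → EuclideanSpace ℝ (Fin D)) (κ t : ℝ) :
    EuclideanSpace ℝ (Fin D) :=
  (∑ j ∈ Finset.range N, Bk κ (t - j) (1/2))⁻¹ •
    ∑ j ∈ Finset.range N, Bk κ (t - j) (1/2) • r j

open Filter Topology Real

/-! As `κ → 0⁺`, `tanh (c / κ) → sign c`, so `B_κ(x, 1/2)` tends to `1` for `|x| < 1/2` and to `0`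
for `|x| > 1/2`. At the integer offsets `x = n - j` this makes the weights of the open shape tend to
the Kronecker delta `δ_{jn}`, and the normalised weighted average of the landmarks tends to `r n`. -/

theorem Real.tanh_eq_one_sub_exp_neg_sq_div (x : ℝ) :
    tanh x = (1 - exp (-x) ^ 2) / (1 + exp (-x) ^ 2) := by
  rw [tanh_eq, div_eq_div_iff (by positivity) (by positivity)]
  have h := exp_add x (-x)
  rw [add_neg_cancel, exp_zero] at h
  linear_combination (-2 * exp (-x)) * h

theorem Real.tendsto_tanh_atTop : Tendsto tanh atTop (𝓝 1) := by
  have h : Tendsto (fun x => exp (-x) ^ 2) atTop (𝓝 0) := by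
    simpa using tendsto_exp_neg_atTop_nhds_zero.pow 2
  have hlim := (tendsto_const_nhds (x := (1 : ℝ)).sub h).div (tendsto_const_nhds.add h)
    (by norm_num : (1 : ℝ) + 0 ≠ 0)
  rw [sub_zero, add_zero, div_one] at hlim
  exact hlim.congr fun x => (tanh_eq_one_sub_exp_neg_sq_div x).symm

theorem Real.tendsto_tanh_atBot : Tendsto tanh atBot (𝓝 (-1)) := by
  simpa [Function.comp_def] using (tendsto_tanh_atTop.comp tendsto_neg_atBot_atTop).neg

theorem Real.tendsto_tanh_div_nhdsGT_zero_of_pos {c : ℝ} (hc : 0 < c) :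
    Tendsto (fun κ => tanh (c / κ)) (𝓝[>] 0) (𝓝 1) := by
  have h : Tendsto (fun κ => c / κ) (𝓝[>] 0) atTop := by
    simpa only [div_eq_mul_inv] using tendsto_inv_nhdsGT_zero.const_mul_atTop hc
  exact tendsto_tanh_atTop.comp h

theorem Real.tendsto_tanh_div_nhdsGT_zero_of_neg {c : ℝ} (hc : c < 0) :
    Tendsto (fun κ => tanh (c / κ)) (𝓝[>] 0) (𝓝 (-1)) := by
  have h : Tendsto (fun κ => c / κ) (𝓝[>] 0) atBot := by
    simpa only [div_eq_mul_inv] using tendsto_inv_nhdsGT_zero.const_mul_atTop_of_neg hc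
  exact tendsto_tanh_atBot.comp h

theorem tendsto_Bk_of_abs_lt {x y : ℝ} (h : |x| < y) :
    Tendsto (fun κ => Bk κ x y) (𝓝[>] 0) (𝓝 1) := by
  obtain ⟨h₁, h₂⟩ := abs_lt.mp h
  have := ((tendsto_tanh_div_nhdsGT_zero_of_pos (c := x + y) (by linarith)).sub
    (tendsto_tanh_div_nhdsGT_zero_of_neg (c := x - y) (by linarith))).const_mul (1 / 2)
  norm_num [Bk] at this ⊢
  exact this

theorem tendsto_Bk_of_abs_lt_abs {x y : ℝ} (h : |y| < |x|) :
    Tendsto (fun κ => Bk κ x y) (𝓝[>] 0) (𝓝 0) := by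
  have of_same_limit {L : ℝ} (hadd : Tendsto (fun κ => tanh ((x + y) / κ)) (𝓝[>] 0) (𝓝 L))
      (hsub : Tendsto (fun κ => tanh ((x - y) / κ)) (𝓝[>] 0) (𝓝 L)) :
      Tendsto (fun κ => Bk κ x y) (𝓝[>] 0) (𝓝 0) := by
    simpa only [Bk, sub_self, mul_zero] using (hadd.sub hsub).const_mul (1 / 2)
  obtain ⟨hy₁, hy₂⟩ := abs_lt.mp h
  rcases le_or_gt 0 x with hx | hx
  · rw [abs_of_nonneg hx] at hy₁ hy₂
    exact of_same_limit (tendsto_tanh_div_nhdsGT_zero_of_pos (by linarith))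
      (tendsto_tanh_div_nhdsGT_zero_of_pos (by linarith))
  · rw [abs_of_neg hx] at hy₁ hy₂
    exact of_same_limit (tendsto_tanh_div_nhdsGT_zero_of_neg (by linarith))
      (tendsto_tanh_div_nhdsGT_zero_of_neg (by linarith))

theorem tendsto_inv_sum_smul_sum_of_tendsto_ite {ι α 𝕜 E : Type*} [NormedField 𝕜]
    [TopologicalSpace E] [AddCommMonoid E] [Module 𝕜 E] [ContinuousAdd E] [ContinuousSMul 𝕜 E]
    [DecidableEq ι] {l : Filter α} {s : Finset ι} {i : ι} (hi : i ∈ s) {w : ι → α → 𝕜}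
    (hw : ∀ j ∈ s, Tendsto (w j) l (𝓝 (if j = i then 1 else 0))) (v : ι → E) :
    Tendsto (fun a => (∑ j ∈ s, w j a)⁻¹ • ∑ j ∈ s, w j a • v j) l (𝓝 (v i)) := by
  have hsum := tendsto_finsetSum s hw
  have hsmul := tendsto_finsetSum s fun j hj => (hw j hj).smul_const (v j)
  simp only [Finset.sum_ite_eq', hi, if_true, ite_smul, one_smul, zero_smul] at hsum hsmul
  simpa using (hsum.inv₀ one_ne_zero).smul hsmul

theorem half_lt_abs_natCast_sub_natCast {m n : ℕ} (h : m ≠ n) : (1 / 2 : ℝ) < |(m : ℝ) - n| := by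
  have hℤ : (1 : ℤ) ≤ |(m : ℤ) - n| := Int.one_le_abs (sub_ne_zero.mpr (by exact_mod_cast h))
  have hℝ : (1 : ℝ) ≤ |(m : ℝ) - n| := by exact_mod_cast hℤ
  linarith

/-- Landmark recovery in the `κ → 0⁺` limit: `r_κ(n) → r_n` for every `0 ≤ n ≤ N-1`. -/
theorem openShape_tendsto_landmark (D N : ℕ) (hN : 1 ≤ N)
    (r : ℕ → EuclideanSpace ℝ (Fin D)) (n : ℕ) (hn : n ≤ N - 1) :
    Filter.Tendsto (fun κ : ℝ => openShape D N r κ (n : ℝ))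
      (nhdsWithin 0 (Set.Ioi 0)) (nhds (r n)) := by
  have hnN : n ∈ Finset.range N := Finset.mem_range.mpr (by omega)
  refine tendsto_inv_sum_smul_sum_of_tendsto_ite hnN (fun j _ => ?_) r
  split_ifs with hj
  · subst hj
    exact tendsto_Bk_of_abs_lt (by norm_num)
  · exact tendsto_Bk_of_abs_lt_abs
      ((abs_of_pos one_half_pos).trans_lt (half_lt_abs_natCast_sub_natCast (Ne.symm hj)))
end

section
/- Collapse of open shapes to the centroid as kappa tends to infinity: let r_0, ..., r_{N-1} be N >= 1 points in R^D. For every fixed real t, the limit as kappa -> +infinity of the open shape r_kappa(t) equals the centroid r* := (1/N) * (sum over j = 0, ..., N-1 of r_j). -/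
/-!
Since `tanh` has slope `1` at `0`, `κ * B_κ(x, y) → y` as `κ → ∞`, for every `x`. The open shape
is a center of mass, which does not change when all weights are multiplied by `κ`; the rescaled
weights all tend to `1/2`, so the shape tends to the center of mass with equal weights.
-/

open Filter Topology Finset

lemma Real.hasDerivAt_tanh (x : ℝ) : HasDerivAt Real.tanh (Real.cosh x ^ 2)⁻¹ x := by
  have h := (Real.hasDerivAt_sinh x).div (Real.hasDerivAt_cosh x) (Real.cosh_pos x).ne'
  rw [← sq, ← sq, Real.cosh_sq_sub_sinh_sq, one_div] at h
  rwa [show Real.tanh = Real.sinh / Real.cosh from funext Real.tanh_eq_sinh_div_cosh]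

lemma HasDerivAt.tendsto_mul_comp_div_atTop {f : ℝ → ℝ} {f' : ℝ} (hf : HasDerivAt f f' 0)
    (hf₀ : f 0 = 0) (a : ℝ) :
    Tendsto (fun κ : ℝ => κ * f (a / κ)) atTop (𝓝 (f' * a)) := by
  have hg : HasDerivAt (fun u => f (a * u)) (f' * a) 0 := by
    have hlin : HasDerivAt (fun u : ℝ => a * u) a 0 := by
      simpa using (hasDerivAt_id (0 : ℝ)).const_mul a
    exact hf.comp_of_eq 0 hlin (mul_zero a).symm
  refine (hg.tendsto_slope_zero_right.comp tendsto_inv_atTop_nhdsGT_zero).congr fun κ => ?_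
  simp [hf₀, div_eq_mul_inv]

lemma tendsto_mul_Bk_atTop (x y : ℝ) :
    Tendsto (fun κ : ℝ => κ * Bk κ x y) atTop (𝓝 y) := by
  have htanh : HasDerivAt Real.tanh 1 0 := by simpa using Real.hasDerivAt_tanh 0
  have h := ((htanh.tendsto_mul_comp_div_atTop Real.tanh_zero (x + y)).sub
    (htanh.tendsto_mul_comp_div_atTop Real.tanh_zero (x - y))).const_mul (1 / 2 : ℝ)
  convert h using 1
  · ext κ; simp only [Bk]; ring
  · congr 1; ring

section CenterMass

variable {ι E : Type*} [NormedAddCommGroup E] [NormedSpace ℝ E]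

lemma Finset.centerMass_const_weights (s : Finset ι) {c : ℝ} (hc : c ≠ 0) (z : ι → E) :
    s.centerMass (fun _ => c) z = (#s : ℝ)⁻¹ • ∑ i ∈ s, z i := by
  rw [centerMass, ← smul_sum, smul_smul, sum_const, nsmul_eq_mul, mul_inv, mul_assoc,
    inv_mul_cancel₀ hc, mul_one]

lemma Filter.Tendsto.centerMass {α : Type*} {l : Filter α} {s : Finset ι} {w : α → ι → ℝ}
    {w₀ : ι → ℝ} (hw : ∀ i ∈ s, Tendsto (fun a => w a i) l (𝓝 (w₀ i)))
    (hw₀ : ∑ i ∈ s, w₀ i ≠ 0) (z : ι → E) :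
    Tendsto (fun a => s.centerMass (w a) z) l (𝓝 (s.centerMass w₀ z)) :=
  ((tendsto_finsetSum s hw).inv₀ hw₀).smul
    (tendsto_finsetSum s fun i hi => (hw i hi).smul_const (z i))

end CenterMass

lemma openShape_eq_centerMass (D N : ℕ) (r : ℕ → EuclideanSpace ℝ (Fin D)) (κ t : ℝ) :
    openShape D N r κ t = (range N).centerMass (fun j => Bk κ (t - j) (1 / 2)) r :=
  rfl

/-- Collapse of open shapes to the centroid as `κ → +∞`: for every fixed `t`,
`r_κ(t)` converges to the centroid `r* = (1/N) ∑_j r_j`. -/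
theorem openShape_tendsto_centroid (D N : ℕ) (hN : 1 ≤ N)
    (r : ℕ → EuclideanSpace ℝ (Fin D)) (t : ℝ) :
    Filter.Tendsto (fun κ : ℝ => openShape D N r κ t) Filter.atTop
      (nhds (((N : ℝ))⁻¹ • ∑ j ∈ Finset.range N, r j)) := by
  have hscale : ∀ᶠ κ : ℝ in atTop,
      (range N).centerMass (fun j => κ * Bk κ (t - j) (1 / 2)) r = openShape D N r κ t := by
    filter_upwards [eventually_ne_atTop 0] with κ hκ
    rw [openShape_eq_centerMass]
    exact (range N).centerMass_smul_left (z := r) hκ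
  have hlim := Tendsto.centerMass (s := range N) (w₀ := fun _ => (1 / 2 : ℝ))
    (fun j _ => tendsto_mul_Bk_atTop (t - j) (1 / 2))
    (by simpa using Nat.one_le_iff_ne_zero.mp hN) r
  rw [centerMass_const_weights _ (by norm_num), card_range] at hlim
  exact hlim.congr' hscale
end
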